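/- Non-conservation of ADF semantics: for the may-must argumentation F with two mutually attacking arguments a_p, a_q and f_Q(a_p) = f_Q(a_q) = ((0,0),(1,1)), the labelling assigning undec to both arguments is the unique fixpoint (hence the unique adf.complete, adf.preferred, and adf.grounded labelling) of the operator Γ^F, and this labelling is not an exact labelling of F; moreover no exact labelling of F is a fixpoint of Γ^F. Hence neither Λ^exact_F ⊆ Λ^adf.x_F nor Λ^adf.x_F ⊆ Λ^exact_F holds in general for x ∈ {complete, preferred, grounded}. -/

import Mathlib

inductive Lab : Type
  | inn | out | undec
deriving DecidableEq

structure MMA (A : Type) [Fintype A] [DecidableEq A] where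
  R : A → A → Prop
  decR : DecidableRel R
  n1 : A → ℕ
  n2 : A → ℕ
  m1 : A → ℕ
  m2 : A → ℕ
  hn : ∀ a, n1 a ≤ n2 a
  hm : ∀ a, m1 a ≤ m2 a

variable {A : Type} [Fintype A] [DecidableEq A]

/-- Number of attackers of `a` labelled `out` by `lam`. -/
def outCnt (F : MMA A) (lam : A → Lab) (a : A) : ℕ :=
  letI := F.decR
  (Finset.univ.filter (fun b => F.R b a ∧ lam b = Lab.out)).card

/-- Number of attackers of `a` labelled `in` by `lam`. -/
def inCnt (F : MMA A) (lam : A → Lab) (a : A) : ℕ :=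
  letI := F.decR
  (Finset.univ.filter (fun b => F.R b a ∧ lam b = Lab.inn)).card

/-- `lam` designates label `l` for argument `a` in `F`. -/
def designates (F : MMA A) (lam : A → Lab) (a : A) : Lab → Prop
  | Lab.inn => F.n1 a ≤ outCnt F lam a ∧ inCnt F lam a < F.m2 a
  | Lab.out => F.m1 a ≤ inCnt F lam a ∧ outCnt F lam a < F.n2 a
  | Lab.undec =>
      (F.n2 a ≤ outCnt F lam a ∧ F.m2 a ≤ inCnt F lam a) ∨
      (F.n1 a ≤ outCnt F lam a ∧ outCnt F lam a < F.n2 a) ∨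
      (F.m1 a ≤ inCnt F lam a ∧ inCnt F lam a < F.m2 a) ∨
      (outCnt F lam a < F.n1 a ∧ inCnt F lam a < F.m1 a)

/-- `a`'s label is proper under `lam`. -/
def proper (F : MMA A) (lam : A → Lab) (a : A) : Prop :=
  designates F lam a (lam a)

/-- Exact labelling: every argument's label is proper. -/
def exactLab (F : MMA A) (lam : A → Lab) : Prop :=
  ∀ a, proper F lam a

/-- Pre-maximally proper labelling. -/
def preMaxProper (F : MMA A) (lam : A → Lab) : Prop :=
  ∀ a, proper F lam a ∨ lam a = Lab.undec

/-- Maximally proper labelling. -/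
def maxProper (F : MMA A) (lam : A → Lab) : Prop :=
  preMaxProper F lam ∧
    ∀ lam', preMaxProper F lam' → ∀ a, proper F lam' a → proper F lam a

/-- The order `⪯` on labellings. -/
def labLE (l1 l2 : A → Lab) : Prop :=
  ∀ a, (l1 a = Lab.inn → l2 a = Lab.inn) ∧ (l1 a = Lab.out → l2 a = Lab.out)

/-- Two mutually attacking arguments, both with scales `((0,0),(1,1))`. -/
def F14 : MMA (Fin 2) where
  R := fun b c => b ≠ c
  decR := fun b c => inferInstanceAs (Decidable (b ≠ c))
  n1 := fun _ => 0
  n2 := fun _ => 0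
  m1 := fun _ => 1
  m2 := fun _ => 1
  hn := fun _ => le_refl 0
  hm := fun _ => le_refl 1

/-- `lamx` is a two-valued completion of `lam`: `lam ⪯ lamx` and `lamx` is ⪯-maximal. -/
def twoVal (lam lamx : A → Lab) : Prop :=
  labLE lam lamx ∧ ∀ mu : A → Lab, labLE lamx mu → labLE mu lamx

/-- `lamx` designates only `l` for `a`. -/
def desOnly (F : MMA A) (lamx : A → Lab) (a : A) (l : Lab) : Prop :=
  designates F lamx a l ∧ ∀ l' : Lab, designates F lamx a l' → l' = l

/-- `lam` is a fixpoint of the operator `Γ^F`. -/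
def isGammaFix (F : MMA A) (lam : A → Lab) : Prop :=
  ∀ a, (lam a = Lab.inn ↔ ∀ lamx : A → Lab, twoVal lam lamx → desOnly F lamx a Lab.inn) ∧
       (lam a = Lab.out ↔ ∀ lamx : A → Lab, twoVal lam lamx → desOnly F lamx a Lab.out)

/-!
In `F14` the `out` thresholds are `(0,0)`, so no labelling ever designates `out`; the label `in`
is designated exactly when the other argument is not `in`, and `undec` exactly when it is. A
fixpoint therefore has no `out`, and its completion that turns every non-`out` label into `in`
then makes each argument's attacker `in`, which rules out `in` too. For the all-`undec` labelling
`undec` is not proper, since no attacker is `in`.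
-/

section Completion

variable {A : Type}

def inCompletion (lam : A → Lab) : A → Lab :=
  fun a => if lam a = Lab.out then Lab.out else Lab.inn

lemma inCompletion_of_ne_out {lam : A → Lab} {a : A} (h : lam a ≠ Lab.out) :
    inCompletion lam a = Lab.inn :=
  if_neg h

lemma twoVal_inCompletion (lam : A → Lab) : twoVal lam (inCompletion lam) := by
  refine ⟨fun a => ⟨fun h => inCompletion_of_ne_out (by simp [h]), fun h => if_pos h⟩, ?_⟩
  intro mu hmu a
  unfold inCompletion at hmu ⊢
  split_ifs with h
  · simp [(hmu a).2 (if_pos h)]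
  · simp [(hmu a).1 (if_neg h)]

variable [Fintype A] [DecidableEq A]

lemma not_designates_out_of_n2_eq_zero (F : MMA A) (lam : A → Lab) {a : A} (h : F.n2 a = 0) :
    ¬ designates F lam a Lab.out :=
  fun hd => by simpa [h] using hd.2

lemma designates_inCompletion_of_isGammaFix {F : MMA A} {lam : A → Lab} (hfix : isGammaFix F lam)
    {a : A} {l : Lab} (hl : lam a = l) (hl' : l ≠ Lab.undec) :
    designates F (inCompletion lam) a l := by
  cases l with
  | inn => exact ((hfix a).1.1 hl _ (twoVal_inCompletion lam)).1
  | out => exact ((hfix a).2.1 hl _ (twoVal_inCompletion lam)).1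
  | undec => exact absurd rfl hl'

end Completion

namespace F14

@[simp] lemma n1_apply (a : Fin 2) : F14.n1 a = 0 := rfl
@[simp] lemma n2_apply (a : Fin 2) : F14.n2 a = 0 := rfl
@[simp] lemma m1_apply (a : Fin 2) : F14.m1 a = 1 := rfl
@[simp] lemma m2_apply (a : Fin 2) : F14.m2 a = 1 := rfl

lemma inCnt_eq (lam : Fin 2 → Lab) (a : Fin 2) :
    inCnt F14 lam a = if lam (1 - a) = Lab.inn then 1 else 0 := by
  unfold inCnt
  fin_cases a <;> rw [Finset.card_filter, Fin.sum_univ_two] <;> simp [F14]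

lemma not_designates_out (lam : Fin 2 → Lab) (a : Fin 2) : ¬ designates F14 lam a Lab.out :=
  not_designates_out_of_n2_eq_zero F14 lam (n2_apply a)

lemma designates_inn_iff (lam : Fin 2 → Lab) (a : Fin 2) :
    designates F14 lam a Lab.inn ↔ lam (1 - a) ≠ Lab.inn := by
  by_cases h : lam (1 - a) = Lab.inn <;> simp [designates, inCnt_eq, h]

lemma designates_undec_iff (lam : Fin 2 → Lab) (a : Fin 2) :
    designates F14 lam a Lab.undec ↔ lam (1 - a) = Lab.inn := by
  by_cases h : lam (1 - a) = Lab.inn <;> simp [designates, inCnt_eq, h]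

lemma ne_out_of_isGammaFix {lam : Fin 2 → Lab} (hfix : isGammaFix F14 lam) (a : Fin 2) :
    lam a ≠ Lab.out :=
  fun h => not_designates_out _ a (designates_inCompletion_of_isGammaFix hfix h (by simp))

lemma eq_undec_of_isGammaFix {lam : Fin 2 → Lab} (hfix : isGammaFix F14 lam) :
    lam = fun _ => Lab.undec := by
  funext a
  cases h : lam a with
  | inn =>
    have hd := designates_inCompletion_of_isGammaFix hfix h (by simp)
    exact absurd (inCompletion_of_ne_out (ne_out_of_isGammaFix hfix (1 - a)))
      ((designates_inn_iff _ a).1 hd)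
  | out => exact absurd h (ne_out_of_isGammaFix hfix a)
  | undec => rfl

lemma isGammaFix_undec : isGammaFix F14 (fun _ => Lab.undec) := by
  have hcompl := twoVal_inCompletion (fun (_ : Fin 2) => Lab.undec)
  refine fun a => ⟨⟨nofun, fun hall => ?_⟩, ⟨nofun, fun hall => ?_⟩⟩
  · exact absurd (inCompletion_of_ne_out (by simp)) ((designates_inn_iff _ a).1 (hall _ hcompl).1)
  · exact absurd (hall _ hcompl).1 (not_designates_out _ a)

lemma not_exactLab_undec : ¬ exactLab F14 (fun _ => Lab.undec) :=
  fun hex => nomatch (designates_undec_iff _ 0).1 (hex 0)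

end F14

theorem stmt14 :
    isGammaFix F14 (fun _ => Lab.undec) ∧
    (∀ lam : Fin 2 → Lab, isGammaFix F14 lam → lam = fun _ => Lab.undec) ∧
    ¬ exactLab F14 (fun _ => Lab.undec) ∧
    (∀ lam : Fin 2 → Lab, exactLab F14 lam → ¬ isGammaFix F14 lam) := by
  refine ⟨F14.isGammaFix_undec, fun _ => F14.eq_undec_of_isGammaFix, F14.not_exactLab_undec, ?_⟩
  intro lam hex hfix
  rw [F14.eq_undec_of_isGammaFix hfix] at hex
  exact F14.not_exactLab_undec hex
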